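/- Let n ≥ 3 and let A ∈ ℝ^{n×n} be symmetric. Then A satisfies condition (M) for the nonnegative orthant ℝ^n₊ := {x ∈ ℝ^n : x_i ≥ 0 for all i} if and only if there exists λ ∈ ℝ such that A = λ I_n. In particular, in this case the quadratic function f(x) = ⟨Ax,x⟩ is constant equal to λ on 𝕊 ∩ ℝ^n₊₊, where ℝ^n₊₊ := {x : x_i > 0 for all i}. -/

import Mathlib

/-!
Testing condition (M) with `y = eᵢ` and `x = eⱼ` shows that the diagonal of `A` is constant.
When `n ≥ 3`, any `j ≠ k` admit a third index `i`, and testing with `y = eᵢ`, `x = eⱼ ± eₖ`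
gives `±(A j k + A k j) ≥ 0`; so a symmetric `A` is scalar. Conversely, the quadratic form of
`λ Iₙ` is constantly `λ` on the unit sphere.
-/

open Matrix RealInnerProductSpace

/-- Condition (M): `⟨Ax,x⟩ ≥ ⟨Ay,y⟩` for all `x ∈ 𝕊` and `y ∈ K ∩ 𝕊` with `x ⊥ y`. -/
def CondM {n : ℕ} (A : Matrix (Fin n) (Fin n) ℝ) (K : Set (EuclideanSpace ℝ (Fin n))) : Prop :=
  ∀ x y : EuclideanSpace ℝ (Fin n), ‖x‖ = 1 → y ∈ K → ‖y‖ = 1 → ⟪x, y⟫ = 0 →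
    ⟪Matrix.toEuclideanLin A y, y⟫ ≤ ⟪Matrix.toEuclideanLin A x, x⟫

section

variable {n : ℕ}

lemma inner_toEuclideanLin_single_single (A : Matrix (Fin n) (Fin n) ℝ) (i j : Fin n) :
    ⟪toEuclideanLin A (EuclideanSpace.single j 1), EuclideanSpace.single i 1⟫ = A i j := by
  simp [EuclideanSpace.inner_single_right]

lemma inner_toEuclideanLin_smul_one (c : ℝ) (x : EuclideanSpace ℝ (Fin n)) :
    ⟪toEuclideanLin (c • 1 : Matrix (Fin n) (Fin n) ℝ) x, x⟫ = c * ‖x‖ ^ 2 := by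
  simp [real_inner_smul_left]

lemma single_one_mem_nonneg (i : Fin n) :
    EuclideanSpace.single i (1 : ℝ) ∈ {x : EuclideanSpace ℝ (Fin n) | ∀ i, 0 ≤ x i} := by
  intro l
  rw [PiLp.single_apply]
  positivity

end

namespace CondM

variable {n : ℕ} {A : Matrix (Fin n) (Fin n) ℝ} {K : Set (EuclideanSpace ℝ (Fin n))}

lemma mul_norm_sq_le (hM : CondM A K) {x y : EuclideanSpace ℝ (Fin n)} (hy : y ∈ K)
    (hy1 : ‖y‖ = 1) (hxy : ⟪x, y⟫ = 0) :
    ⟪toEuclideanLin A y, y⟫ * ‖x‖ ^ 2 ≤ ⟪toEuclideanLin A x, x⟫ := by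
  rcases eq_or_ne x 0 with rfl | hx
  · simp
  have hx_pos : 0 < ‖x‖ := norm_pos_iff.2 hx
  have key := hM (‖x‖⁻¹ • x) y (by simp [norm_smul, hx_pos.ne']) hy hy1
    (by rw [real_inner_smul_left, hxy, mul_zero])
  simp only [map_smul, real_inner_smul_left, real_inner_smul_right] at key
  rw [← mul_assoc, ← mul_inv, ← sq, le_inv_mul_iff₀ (by positivity)] at key
  rwa [mul_comm]

variable (hK : ∀ i, EuclideanSpace.single i 1 ∈ K)
include hK

lemma diag_le (hM : CondM A K) {i j : Fin n} (hij : i ≠ j) : A i i ≤ A j j := by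
  simpa [inner_toEuclideanLin_single_single] using
    hM (EuclideanSpace.single j 1) (EuclideanSpace.single i 1) (by simp) (hK i) (by simp)
      (by simp [EuclideanSpace.inner_single_right, hij])

lemma diag_eq (hM : CondM A K) (i j : Fin n) : A i i = A j j := by
  rcases eq_or_ne i j with rfl | hij
  · rfl
  · exact (hM.diag_le hK hij).antisymm (hM.diag_le hK hij.symm)

lemma add_transpose_eq_zero (hM : CondM A K) {i j k : Fin n} (hij : i ≠ j) (hik : i ≠ k)
    (hjk : j ≠ k) : A j k + A k j = 0 := by
  set e : Fin n → EuclideanSpace ℝ (Fin n) := fun l => EuclideanSpace.single l 1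
  have horth : ⟪e j, e k⟫ = 0 := by simp [e, EuclideanSpace.inner_single_right, hjk.symm]
  have hplus := hM.mul_norm_sq_le (x := e j + e k) (hK i) (by simp)
    (by simp [e, inner_add_left, EuclideanSpace.inner_single_right, hij.symm, hik.symm])
  have hminus := hM.mul_norm_sq_le (x := e j - e k) (hK i) (by simp)
    (by simp [e, inner_sub_left, EuclideanSpace.inner_single_right, hij.symm, hik.symm])
  rw [norm_add_sq_real, horth] at hplus
  rw [norm_sub_sq_real, horth] at hminus
  simp only [e, map_add, map_sub, inner_add_left, inner_add_right, inner_sub_left,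
    inner_sub_right, inner_toEuclideanLin_single_single, PiLp.norm_single, norm_one] at hplus hminus
  rw [hM.diag_eq hK j i, hM.diag_eq hK k i] at hplus hminus
  linarith

lemma exists_eq_smul_one (hM : CondM A K) (hn : 3 ≤ n) (hA : A.IsSymm) :
    ∃ c : ℝ, A = c • (1 : Matrix (Fin n) (Fin n) ℝ) := by
  refine ⟨A ⟨0, by omega⟩ ⟨0, by omega⟩, Matrix.ext fun j k => ?_⟩
  rcases eq_or_ne j k with rfl | hjk
  · simpa using hM.diag_eq hK j _
  · obtain ⟨i, hij, hik⟩ := Fin.exists_ne_and_ne_of_two_lt j k (by omega)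
    have hsum := hM.add_transpose_eq_zero hK hij hik hjk
    rw [hA.apply j k] at hsum
    simp only [Matrix.smul_apply, one_apply_ne hjk, smul_zero]
    linarith

end CondM

/-- For `n ≥ 3` and symmetric `A`, condition (M) for the nonnegative orthant holds
iff `A = λ Iₙ` for some `λ ∈ ℝ`; in that case the quadratic form is constantly `λ`
on `𝕊 ∩ ℝⁿ₊₊`. -/
theorem quadratic_spherical_stmt11 (n : ℕ) (hn : 3 ≤ n)
    (A : Matrix (Fin n) (Fin n) ℝ) (hA : A.IsSymm) :
    (CondM A {x : EuclideanSpace ℝ (Fin n) | ∀ i, 0 ≤ x i} ↔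
      ∃ lam : ℝ, A = lam • (1 : Matrix (Fin n) (Fin n) ℝ)) ∧
    (∀ lam : ℝ, A = lam • (1 : Matrix (Fin n) (Fin n) ℝ) →
      ∀ x : EuclideanSpace ℝ (Fin n), ‖x‖ = 1 → (∀ i, 0 < x i) →
        ⟪Matrix.toEuclideanLin A x, x⟫ = lam) := by
  refine ⟨⟨fun hM => hM.exists_eq_smul_one single_one_mem_nonneg hn hA, ?_⟩, ?_⟩
  · rintro ⟨c, rfl⟩ x y hx - hy -
    rw [inner_toEuclideanLin_smul_one, inner_toEuclideanLin_smul_one, hx, hy]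
  · rintro c rfl x hx -
    rw [inner_toEuclideanLin_smul_one, hx, one_pow, mul_one]
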